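/- Let (F,G): A → B be an adjoint pair between bicomplete abelian categories and (φ,ψ) the induced Galois connection between Pr(A) and Pr(B). For any morphism h: N → M in A, φ(α_h) = α_{F(h)}, where α_h denotes the alpha preradical associated to h. -/

import Mathlib

open CategoryTheory CategoryTheory.Limits

universe v u

section AlphaDefs

variable {C : Type u} [Category.{v} C] [Abelian C] [HasLimits C] [HasColimits C]

/-- The functor `𝔸_M^N = N^{(Hom(M,−))}`. -/
noncomputable def alphaFunctor (N M : C) : C ⥤ C where
  obj L := ∐ (fun _ : (M ⟶ L) => N)
  map {L L'} g := Sigma.desc (fun f => Sigma.ι (fun _ : (M ⟶ L') => N) (f ≫ g))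

/-- The natural transformation `𝔞_h : 𝔸_M^N ⟶ 1_C`, with `[𝔞_h]_L ∘ i_f = f ∘ h`. -/
noncomputable def alphaTrans {N M : C} (h : N ⟶ M) : alphaFunctor N M ⟶ 𝟭 C where
  app L := Sigma.desc (fun f : M ⟶ L => h ≫ f)
  naturality L L' g := by
    dsimp [alphaFunctor]
    ext f
    simp

/-- The alpha preradical `α_h := Im(𝔞_h)` associated to `h : N ⟶ M`. -/
noncomputable def alphaPrerad {N M : C} (h : N ⟶ M) : Subobject (𝟭 C) :=
  imageSubobject (alphaTrans h)

end AlphaDefs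

variable {A : Type u} [Category.{v} A] [Abelian A] [HasLimits A] [HasColimits A]
variable {B : Type u} [Category.{v} B] [Abelian B] [HasLimits B] [HasColimits B]
variable (F : A ⥤ B) (G : B ⥤ A) (adj : F ⊣ G)

/-- `φ(τ) = Im(ε ∘ FτG)`. -/
noncomputable def preradPhi (τ : Subobject (𝟭 A)) : Subobject (𝟭 B) :=
  imageSubobject
    ((Functor.whiskerRight (Functor.whiskerLeft G τ.arrow) F ≫ adj.counit :
      (G ⋙ (τ : A ⥤ A)) ⋙ F ⟶ 𝟭 B))

/-
In an abelian category every epimorphism is strong, so `φ` commutes with taking images: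
`φ(Im θ) = Im(ε ∘ FθG)` because `F` preserves the epimorphism onto `Im θ`. For `θ = 𝔞_h` the
transformation `F 𝔞_h G` followed by `ε` is identified with `𝔞_{Fh}` by the isomorphism
`(FN)^{(Hom(FM, X))} ≅ F(N^{(Hom(M, GX))})` coming from `F` preserving coproducts and the
adjunction bijection `Hom(FM, X) ≃ Hom(M, GX)`.
-/

open Functor

lemma imageSubobject_strongEpi_comp {C : Type*} [Category C] {X' X Y : C} (e : X' ⟶ X)
    [StrongEpi e] (f : X ⟶ Y) [HasImage f] [HasImage (e ≫ f)] :
    imageSubobject (e ≫ f) = imageSubobject f := by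
  refine le_antisymm (imageSubobject_comp_le e f) ?_
  have sq : CommSq (factorThruImageSubobject (e ≫ f)) e (imageSubobject (e ≫ f)).arrow f :=
    ⟨by simp⟩
  exact imageSubobject_le f sq.lift sq.fac_right

section

variable {C D : Type u} [Category.{v} C] [Category.{v} D] {F : C ⥤ D} {G : D ⥤ C}

lemma preradPhi_imageSubobject [Abelian C] [Abelian D] (adj : F ⊣ G) {X : C ⥤ C}
    (θ : X ⟶ 𝟭 C) :
    preradPhi F G adj (imageSubobject θ) =
      imageSubobject (whiskerRight (whiskerLeft G θ) F ≫ adj.counit) := by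
  have := adj.isLeftAdjoint
  let e := factorThruImageSubobject θ
  have : ∀ X, Epi ((whiskerLeft G e).app X) := fun X => (inferInstance : Epi (e.app (G.obj X)))
  have := NatTrans.epi_of_epi_app (whiskerLeft G e)
  have := strongEpi_of_epi (whiskerRight (whiskerLeft G e) F)
  rw [preradPhi, ← imageSubobject_strongEpi_comp (whiskerRight (whiskerLeft G e) F),
    ← Category.assoc, ← whiskerRight_comp, ← whiskerLeft_comp, imageSubobject_arrow_comp]

variable [HasColimits C] [HasColimits D]

noncomputable def alphaFunctorObjIsoOfAdjunction (adj : F ⊣ G) (N M : C) (X : D) :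
    (∐ fun _ : F.obj M ⟶ X => F.obj N) ≅ F.obj (∐ fun _ : M ⟶ G.obj X => N) :=
  have := adj.isLeftAdjoint
  Sigma.whiskerEquiv (adj.homEquiv M X) (fun _ => Iso.refl (F.obj N)) ≪≫
    asIso (sigmaComparison F fun _ : M ⟶ G.obj X => N)

lemma ι_alphaFunctorObjIsoOfAdjunction_hom (adj : F ⊣ G) (N M : C) (X : D) (g : F.obj M ⟶ X) :
    Sigma.ι _ g ≫ (alphaFunctorObjIsoOfAdjunction adj N M X).hom =
      F.map (Sigma.ι (fun _ : M ⟶ G.obj X => N) (adj.homEquiv M X g)) := by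
  simp [alphaFunctorObjIsoOfAdjunction]

noncomputable def alphaFunctorIsoOfAdjunction (adj : F ⊣ G) (N M : C) :
    alphaFunctor (F.obj N) (F.obj M) ≅ (G ⋙ alphaFunctor N M) ⋙ F :=
  NatIso.ofComponents (alphaFunctorObjIsoOfAdjunction adj N M) fun g =>
    Sigma.hom_ext _ _ fun f => by
      simp [alphaFunctor, reassoc_of% ι_alphaFunctorObjIsoOfAdjunction_hom,
        ι_alphaFunctorObjIsoOfAdjunction_hom, ← F.map_comp,
        Adjunction.homEquiv_naturality_right]

lemma alphaFunctorObjIsoOfAdjunction_hom_comp (adj : F ⊣ G) {N M : C} (h : N ⟶ M) (X : D) :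
    (alphaFunctorObjIsoOfAdjunction adj N M X).hom ≫
        F.map (Sigma.desc fun f : M ⟶ G.obj X => h ≫ f) ≫ adj.counit.app X =
      Sigma.desc fun g : F.obj M ⟶ X => F.map h ≫ g := by
  refine Sigma.hom_ext _ _ fun g => ?_
  rw [reassoc_of% ι_alphaFunctorObjIsoOfAdjunction_hom, ← F.map_comp_assoc, Sigma.ι_desc,
    Sigma.ι_desc]
  simp [Adjunction.homEquiv_unit]

lemma alphaFunctorIsoOfAdjunction_hom_comp (adj : F ⊣ G) {N M : C} (h : N ⟶ M) :
    (alphaFunctorIsoOfAdjunction adj N M).hom ≫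
        whiskerRight (whiskerLeft G (alphaTrans h)) F ≫ adj.counit =
      alphaTrans (F.map h) := by
  ext X : 2
  exact alphaFunctorObjIsoOfAdjunction_hom_comp adj h X

end

/-- The coadjoint part `φ` of the induced Galois connection sends alpha preradicals
to alpha preradicals: `φ(α_h) = α_{F(h)}`. -/
theorem preradPhi_alphaPrerad {N M : A} (h : N ⟶ M) :
    preradPhi F G adj (alphaPrerad h) = alphaPrerad (F.map h) := by
  rw [alphaPrerad, preradPhi_imageSubobject, alphaPrerad,
    ← imageSubobject_iso_comp (alphaFunctorIsoOfAdjunction adj N M).hom]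
  simp only [alphaFunctorIsoOfAdjunction_hom_comp]
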